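/- Let L² := L²([0,∞); ℝⁿ). Suppose (i) H₁, H₂ : L² → L² have finite gain with zero offset and are causal; (ii) the feedback interconnection [H₁, τH₂] is well-posed and causal on the extended space L₂e for all τ ∈ (0, 1]; and (iii) H₁ and H₂ have strictly separated SRGs, i.e. there exists r_min > 0 with dist(SRG(H₁)⁻¹, −τ·chord(SRG(H₂))) ≥ r_min for all τ ∈ (0, 1]. Then [H₁, H₂] maps all of L² to L² and has finite incremental gain. -/

import Mathlib

/-!
**Statement 13** (Non-incremental homotopy via SRG separation).  Same setting as the
non-incremental homotopy theorem: signals are functions `ℝ → ℝⁿ` with the measure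
`μ₀ = Lebesgue restricted to [0, ∞)`; `H₁, H₂` are causal operators on `L²` with finite
gain with zero offset; the closed loop `[H₁, τH₂]` is well-posed and causal on the
extended space for all `τ ∈ (0, 1]` (with `H₁e, H₂e` the causal extensions of
`H₁, H₂`); and `H₁, H₂` have strictly separated SRGs with margin `r_min > 0`:
`dist(SRG(H₁)⁻¹, -τ·chord(SRG(H₂))) ≥ r_min` for all `τ ∈ (0, 1]`.  Then `[H₁, H₂]`
maps all of `L²` to `L²` and has finite incremental gain.

The separation hypothesis is expressed pointwise; a point `z = 0` of `SRG(H₁)` inverts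
to `∞`, at infinite distance from every finite point, hence the guard `z ≠ 0`.
-/

open MeasureTheory

noncomputable section

variable {n : ℕ}

/-- `ℝⁿ`. -/
abbrev En (n : ℕ) := EuclideanSpace ℝ (Fin n)

/-- Lebesgue measure restricted to `[0, ∞)`. -/
def mu0 : Measure ℝ := volume.restrict (Set.Ici 0)

/-- Truncation `P_T`: sets a signal to zero on `[T, ∞)`. -/
def trunc (T : ℝ) (u : ℝ → En n) : ℝ → En n := Set.indicator (Set.Iio T) u

/-- `L²` membership. -/
def InL2 (u : ℝ → En n) : Prop := MemLp u 2 mu0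

/-- Extended-space membership: every truncation is in `L²`. -/
def InL2e (u : ℝ → En n) : Prop := ∀ T > 0, InL2 (trunc T u)

/-- The `L²` norm of a signal (as a real number). -/
def nrm (u : ℝ → En n) : ℝ := (eLpNorm u 2 mu0).toReal

/-- The `L²` inner product of two signals. -/
def ip (u v : ℝ → En n) : ℝ := ∫ t, inner ℝ (u t) (v t) ∂mu0

/-- The angle between two signals. -/
def ang (u v : ℝ → En n) : ℝ := Real.arccos (ip u v / (nrm u * nrm v))

/-- The Scaled Relative Graph of an operator on `L²`. -/
def srgOp (F : (ℝ → En n) → (ℝ → En n)) : Set ℂ :=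
  {w | ∃ u₁ u₂, InL2 u₁ ∧ InL2 u₂ ∧ ¬ u₁ =ᵐ[mu0] u₂ ∧
    (w = (nrm (F u₁ - F u₂) / nrm (u₁ - u₂) : ℝ) *
        Complex.exp (Complex.I * (ang (u₁ - u₂) (F u₁ - F u₂) : ℝ)) ∨
     w = (nrm (F u₁ - F u₂) / nrm (u₁ - u₂) : ℝ) *
        Complex.exp (-(Complex.I * (ang (u₁ - u₂) (F u₁ - F u₂) : ℝ))))}

/-- The chord property for a set of complex numbers. -/
def ChordProperty (G : Set ℂ) : Prop :=
  ∀ z ∈ G, ∀ l ∈ Set.Icc (0 : ℝ) 1,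
    (l : ℂ) * z + (1 - (l : ℂ)) * (starRingEnd ℂ) z ∈ G

/-- The chord-property closure: the smallest superset with the chord property. -/
def chordClosure (G : Set ℂ) : Set ℂ := ⋂₀ {S | G ⊆ S ∧ ChordProperty S}

/-- Membership in the feedback relation `[H₁, τH₂]` on `L² × L²`. -/
def FbMem (H₁ H₂ : (ℝ → En n) → (ℝ → En n)) (τ : ℝ) (u y : ℝ → En n) : Prop :=
  InL2 u ∧ InL2 y ∧ ∃ e, InL2 e ∧ e =ᵐ[mu0] u - τ • H₂ y ∧ y =ᵐ[mu0] H₁ e ∧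
    ∀ e', InL2 e' → e' =ᵐ[mu0] u - τ • H₂ y → y =ᵐ[mu0] H₁ e' → e' =ᵐ[mu0] e

/-!
For two `L²` solutions of the loop put `X = Δe`, `Y = Δy` and `V = Δ(H₂ y)`, so that
`Δu = X + τV`. The points `(‖X‖/‖Y‖) e^{i∠(X,Y)} ∈ SRG(H₁)⁻¹` and `(‖V‖/‖Y‖) e^{i∠(Y,V)} ∈ SRG(H₂)`
realise the norms and angles of `X`, `Y`, `V` in the plane, except for the angle between the
components of `X` and `V` orthogonal to `Y`; choosing the point of the chord whose imaginary part
is scaled by the cosine of that angle gives a point of `-τ·chord(SRG(H₂))` at distance at most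
`‖X + τV‖/‖Y‖ = ‖Δu‖/‖Δy‖` from `SRG(H₁)⁻¹`. The separation margin thus yields
`r_min ‖Δy‖ ≤ ‖Δu‖`, and comparison with the zero solution yields `r_min ‖y‖ ≤ ‖u‖`.

That `[H₁, τH₂]` maps `L²` into `L²` is proved by homotopy in `τ`. For `τγ₁γ₂ ≤ 1/2` the
truncations of the output are bounded by small gain. If it holds at `τ`, causality and
well-posedness transfer `r_min ‖y‖ ≤ ‖u‖` to the truncations of extended-space solutions at `τ`;
a solution at `τ'` is a solution at `τ` with input `u - (τ' - τ) H₂ y`, whose truncations are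
then uniformly bounded as soon as `(τ' - τ) γ₂ ≤ r_min / 2`. Steps of this fixed size reach `τ = 1`.
-/

open Filter Topology InnerProductGeometry Complex ComplexConjugate
open scoped RealInnerProductSpace

theorem exists_abs_le_one_eq_mul {K : Type*} [Field K] [LinearOrder K] [IsStrictOrderedRing K]
    {a b : K} (h : |a| ≤ |b|) : ∃ t : K, |t| ≤ 1 ∧ a = t * b := by
  rcases eq_or_ne b 0 with rfl | hb
  · exact ⟨0, by simp, by simpa using h⟩
  · refine ⟨a / b, ?_, (div_mul_cancel₀ a hb).symm⟩
    rw [abs_div]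
    exact div_le_one_of_le₀ h (abs_nonneg b)

theorem exists_abs_le_one_sq_add_sq_le {K : Type*} [Field K] [LinearOrder K]
    [IsStrictOrderedRing K] {A B C D P : K} (τ : K) (h : |P - A * C| ≤ |B * D|) :
    ∃ t : K, |t| ≤ 1 ∧ (A + τ * C) ^ 2 + (B + τ * (t * D)) ^ 2 ≤
      A ^ 2 + B ^ 2 + 2 * τ * P + τ ^ 2 * (C ^ 2 + D ^ 2) := by
  obtain ⟨t, ht, hP⟩ := exists_abs_le_one_eq_mul h
  refine ⟨t, ht, ?_⟩
  have ht2 : t ^ 2 ≤ 1 := (sq_le_one_iff_abs_le_one t).2 ht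
  rw [show P = A * C + t * (B * D) by linarith]
  nlinarith [mul_le_mul_of_nonneg_left ht2 (sq_nonneg (τ * D))]

theorem norm_add_chord_sq (a b τ θ φ l : ℝ) :
    ‖(a : ℂ) * exp (I * θ) + τ * (l * ((b : ℂ) * exp (I * φ))
        + (1 - l) * conj ((b : ℂ) * exp (I * φ)))‖ ^ 2 =
      (a * Real.cos θ + τ * (b * Real.cos φ)) ^ 2
        + (a * Real.sin θ + τ * ((2 * l - 1) * (b * Real.sin φ))) ^ 2 := by
  rw [mul_comm I (θ : ℂ), mul_comm I (φ : ℂ), exp_mul_I, exp_mul_I, Complex.sq_norm, normSq_apply]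
  simp only [← ofReal_cos, ← ofReal_sin, map_add, map_mul, conj_ofReal, conj_I, add_re, add_im,
    mul_re, mul_im, ofReal_re, ofReal_im, I_re, I_im, sub_re, sub_im, one_re, one_im, neg_re,
    neg_im]
  ring

section Geometry

variable {F : Type*} [NormedAddCommGroup F] [InnerProductSpace ℝ F]

theorem norm_mul_cos_angle_of_norm_eq_one (x : F) {y : F} (hy : ‖y‖ = 1) :
    ‖x‖ * Real.cos (angle x y) = ⟪x, y⟫ := by
  rw [← cos_angle_mul_norm_mul_norm, hy]
  ring

theorem norm_mul_sin_angle_of_norm_eq_one (x : F) {y : F} (hy : ‖y‖ = 1) :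
    ‖x‖ * Real.sin (angle x y) = ‖x - ⟪x, y⟫ • y‖ := by
  refine (sq_eq_sq₀ (mul_nonneg (norm_nonneg x) (sin_angle_nonneg x y)) (norm_nonneg _)).1 ?_
  rw [norm_sub_sq_real, norm_smul, real_inner_smul_right, hy, Real.norm_eq_abs, mul_one, sq_abs,
    mul_pow, Real.sin_sq, mul_sub, ← mul_pow, norm_mul_cos_angle_of_norm_eq_one x hy]
  ring

theorem exists_chord_norm_le_of_norm_eq_one (x v : F) {y : F} (hy : ‖y‖ = 1) {τ : ℝ}
    (hτ : 0 ≤ τ) :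
    ∃ l ∈ Set.Icc (0 : ℝ) 1,
      ‖(‖x‖ : ℂ) * exp (I * angle x y) + τ * (l * ((‖v‖ : ℂ) * exp (I * angle y v))
        + (1 - l) * conj ((‖v‖ : ℂ) * exp (I * angle y v)))‖ ≤ ‖x + τ • v‖ := by
  have hA := norm_mul_cos_angle_of_norm_eq_one x hy
  have hB := norm_mul_sin_angle_of_norm_eq_one x hy
  have hC : ‖v‖ * Real.cos (angle y v) = ⟪y, v⟫ := by
    rw [angle_comm, norm_mul_cos_angle_of_norm_eq_one v hy, real_inner_comm]
  have hD : ‖v‖ * Real.sin (angle y v) = ‖v - ⟪y, v⟫ • y‖ := by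
    rw [angle_comm, norm_mul_sin_angle_of_norm_eq_one v hy, real_inner_comm]
  have hgram : |⟪x, v⟫ - ‖x‖ * Real.cos (angle x y) * (‖v‖ * Real.cos (angle y v))| ≤
      |‖x‖ * Real.sin (angle x y) * (‖v‖ * Real.sin (angle y v))| := by
    have hinner : ⟪x - ⟪x, y⟫ • y, v - ⟪y, v⟫ • y⟫ = ⟪x, v⟫ - ⟪x, y⟫ * ⟪y, v⟫ := by
      simp only [inner_sub_left, inner_sub_right, real_inner_smul_left, real_inner_smul_right,
        real_inner_self_eq_norm_sq, hy]
      ring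
    -- Cauchy–Schwarz for the components of `x` and `v` orthogonal to `y`
    rw [hA, hB, hC, hD, abs_of_nonneg (mul_nonneg (norm_nonneg _) (norm_nonneg _)), ← hinner]
    exact abs_real_inner_le_norm _ _
  obtain ⟨t, ht, hle⟩ := exists_abs_le_one_sq_add_sq_le τ hgram
  obtain ⟨ht₁, ht₂⟩ := abs_le.1 ht
  refine ⟨(t + 1) / 2, ⟨by linarith, by linarith⟩, ?_⟩
  refine (pow_le_pow_iff_left₀ (norm_nonneg _) (norm_nonneg _) two_ne_zero).1 ?_
  rw [norm_add_chord_sq, show 2 * ((t + 1) / 2) - 1 = t by ring, norm_add_sq_real, norm_smul,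
    real_inner_smul_right, Real.norm_eq_abs, abs_of_nonneg hτ]
  calc _ ≤ _ := hle
    _ = ‖x‖ ^ 2 * (Real.cos (angle x y) ^ 2 + Real.sin (angle x y) ^ 2) + 2 * τ * ⟪x, v⟫
        + τ ^ 2 * (‖v‖ ^ 2 * (Real.cos (angle y v) ^ 2 + Real.sin (angle y v) ^ 2)) := by ring
    _ = ‖x‖ ^ 2 + 2 * (τ * ⟪x, v⟫) + (τ * ‖v‖) ^ 2 := by
      rw [Real.cos_sq_add_sin_sq, Real.cos_sq_add_sin_sq]
      ring

theorem exists_chord_norm_le (x v : F) {y : F} (hy : y ≠ 0) {τ : ℝ} (hτ : 0 ≤ τ) :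
    ∃ l ∈ Set.Icc (0 : ℝ) 1,
      ‖((‖x‖ / ‖y‖ : ℝ) : ℂ) * exp (I * angle x y)
        + τ * (l * (((‖v‖ / ‖y‖ : ℝ) : ℂ) * exp (I * angle y v))
        + (1 - l) * conj (((‖v‖ / ‖y‖ : ℝ) : ℂ) * exp (I * angle y v)))‖ ≤ ‖x + τ • v‖ / ‖y‖ := by
  have hny : 0 < ‖y‖ := norm_pos_iff.2 hy
  have hunit : ‖‖y‖⁻¹ • y‖ = 1 := norm_smul_inv_norm hy
  obtain ⟨l, hl, hle⟩ := exists_chord_norm_le_of_norm_eq_one x v hunit hτ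
  rw [angle_smul_right_of_pos _ _ (inv_pos.2 hny), angle_smul_left_of_pos _ _ (inv_pos.2 hny)]
    at hle
  refine ⟨l, hl, ?_⟩
  calc _ = ‖y‖⁻¹ * ‖(‖x‖ : ℂ) * exp (I * angle x y) + τ * (l * ((‖v‖ : ℂ) * exp (I * angle y v))
        + (1 - l) * conj ((‖v‖ : ℂ) * exp (I * angle y v)))‖ := by
        rw [← inv_pos.2 hny |>.le |> Real.norm_of_nonneg, ← norm_real, ← norm_mul]
        congr 1
        simp only [ofReal_div, ofReal_inv, map_mul, map_div₀, conj_ofReal]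
        ring
    _ ≤ ‖y‖⁻¹ * ‖x + τ • v‖ := by gcongr
    _ = ‖x + τ • v‖ / ‖y‖ := inv_mul_eq_div _ _

end Geometry

theorem MeasureTheory.Lp.ne_zero_of_ae_eq_sub {α E : Type*} [MeasurableSpace α] {μ : Measure α}
    [NormedAddCommGroup E] {p : ENNReal} {X : Lp E p μ} {f g : α → E}
    (hX : ⇑X =ᵐ[μ] f - g) (hfg : ¬f =ᵐ[μ] g) : X ≠ 0 := fun h =>
  hfg (eventuallyEq_iff_sub.2 (hX.symm.trans (Lp.eq_zero_iff_ae_eq_zero.1 h)))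

section Signals

variable {f g : ℝ → En n}

theorem nrm_nonneg (f : ℝ → En n) : 0 ≤ nrm f :=
  ENNReal.toReal_nonneg

theorem nrm_congr (h : f =ᵐ[mu0] g) : nrm f = nrm g := by
  rw [nrm, nrm, eLpNorm_congr_ae h]

theorem nrm_zero : nrm (0 : ℝ → En n) = 0 := by
  simp [nrm]

theorem nrm_le_mul_of_eLpNorm_le {γ : ℝ} (hγ : 0 ≤ γ) (hg : InL2 g)
    (h : eLpNorm f 2 mu0 ≤ ENNReal.ofReal γ * eLpNorm g 2 mu0) : nrm f ≤ γ * nrm g := by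
  have := ENNReal.toReal_mono (ENNReal.mul_ne_top ENNReal.ofReal_ne_top hg.2.ne) h
  rwa [ENNReal.toReal_mul, ENNReal.toReal_ofReal hγ] at this

theorem eLpNorm_le_of_nrm_le {γ : ℝ} (hγ : 0 ≤ γ) (hf : InL2 f) (h : nrm f ≤ γ * nrm g) :
    eLpNorm f 2 mu0 ≤ ENNReal.ofReal γ * eLpNorm g 2 mu0 := by
  rw [← ENNReal.ofReal_toReal hf.2.ne]
  calc ENNReal.ofReal (nrm f) ≤ ENNReal.ofReal (γ * nrm g) := ENNReal.ofReal_le_ofReal h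
    _ ≤ ENNReal.ofReal γ * eLpNorm g 2 mu0 := by
      rw [ENNReal.ofReal_mul hγ]
      gcongr
      exact ENNReal.ofReal_toReal_le

theorem nrm_smul (c : ℝ) (f : ℝ → En n) : nrm (c • f) = |c| * nrm f := by
  rw [nrm, nrm, eLpNorm_const_smul, ENNReal.toReal_mul, toReal_enorm, Real.norm_eq_abs]

theorem nrm_eq_norm {X : ℝ →₂[mu0] En n} (hX : ⇑X =ᵐ[mu0] f) : nrm f = ‖X‖ := by
  rw [Lp.norm_def, nrm, eLpNorm_congr_ae hX]

theorem nrm_sub_le (hf : InL2 f) (hg : InL2 g) : nrm (f - g) ≤ nrm f + nrm g := by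
  rw [nrm_eq_norm (hf.sub hg).coeFn_toLp, MemLp.toLp_sub hf hg, nrm_eq_norm hf.coeFn_toLp,
    nrm_eq_norm hg.coeFn_toLp]
  exact norm_sub_le _ _

theorem ip_eq_inner {X Y : ℝ →₂[mu0] En n} (hX : ⇑X =ᵐ[mu0] f) (hY : ⇑Y =ᵐ[mu0] g) :
    ip f g = ⟪X, Y⟫ := by
  rw [L2.inner_def]
  refine integral_congr_ae ?_
  filter_upwards [hX, hY] with t hXt hYt
  rw [hXt, hYt]

theorem ang_eq_angle {X Y : ℝ →₂[mu0] En n} (hX : ⇑X =ᵐ[mu0] f) (hY : ⇑Y =ᵐ[mu0] g) :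
    ang f g = angle X Y := by
  rw [ang, ip_eq_inner hX hY, nrm_eq_norm hX, nrm_eq_norm hY, angle]

theorem trunc_sub (T : ℝ) (f g : ℝ → En n) : trunc T (f - g) = trunc T f - trunc T g :=
  Set.indicator_sub' _ f g

theorem trunc_smul (T c : ℝ) (f : ℝ → En n) : trunc T (c • f) = c • trunc T f :=
  Set.indicator_const_smul _ c f

theorem trunc_congr (T : ℝ) (h : f =ᵐ[mu0] g) : trunc T f =ᵐ[mu0] trunc T g :=
  h.indicator

theorem InL2.trunc (hf : InL2 f) (T : ℝ) : InL2 (trunc T f) :=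
  MemLp.indicator measurableSet_Iio hf

theorem InL2.inL2e (hf : InL2 f) : InL2e f :=
  fun T _ => hf.trunc T

theorem InL2e.sub (hf : InL2e f) (hg : InL2e g) : InL2e (f - g) := fun T hT => by
  simpa only [InL2, trunc_sub] using (hf T hT).sub (hg T hT)

theorem InL2e.smul (hf : InL2e f) (c : ℝ) : InL2e (c • f) := fun T hT => by
  simpa only [InL2, trunc_smul] using (hf T hT).const_smul c

theorem eLpNorm_trunc_le (T : ℝ) (f : ℝ → En n) : eLpNorm (trunc T f) 2 mu0 ≤ eLpNorm f 2 mu0 :=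
  eLpNorm_indicator_le f

theorem nrm_trunc_le (hf : InL2 f) (T : ℝ) : nrm (trunc T f) ≤ nrm f :=
  ENNReal.toReal_mono hf.2.ne (eLpNorm_trunc_le T f)

theorem InL2e.inL2_of_nrm_trunc_le (hf : InL2e f) {C : ℝ} (hC : ∀ T > 0, nrm (trunc T f) ≤ C) :
    InL2 f := by
  have hmem (k : ℕ) : InL2 (trunc (k + 1) f) := hf _ (by positivity)
  have hlim : ∀ᵐ t ∂mu0, Tendsto (fun k : ℕ => trunc (k + 1) f t) atTop (𝓝 (f t)) := by
    refine ae_of_all _ fun t => tendsto_atTop_of_eventually_const (i₀ := ⌊t⌋₊) fun k hk => ?_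
    have : t < k + 1 := (Nat.lt_floor_add_one t).trans_le (by gcongr)
    exact Set.indicator_of_mem (Set.mem_Iio.2 this) f
  refine ⟨aestronglyMeasurable_of_tendsto_ae _ (fun k => (hmem k).1) hlim, ?_⟩
  refine (Lp.eLpNorm_le_of_ae_tendsto (C := ENNReal.ofReal C) (Eventually.of_forall fun k => ?_)
    (fun k => (hmem k).1) hlim).trans_lt ENNReal.ofReal_lt_top
  rw [← ENNReal.ofReal_toReal (hmem k).2.ne]
  exact ENNReal.ofReal_le_ofReal (hC _ (by positivity))

end Signals

section SRG

variable {H₁ H₂ : (ℝ → En n) → (ℝ → En n)}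

theorem mem_chordClosure {G : Set ℂ} {w : ℂ} (hw : w ∈ G) {l : ℝ} (hl : l ∈ Set.Icc (0 : ℝ) 1) :
    l * w + (1 - l) * conj w ∈ chordClosure G :=
  fun _ hS => hS.2 w (hS.1 hw) l hl

theorem mem_srgOp {F : (ℝ → En n) → (ℝ → En n)} {u₁ u₂ : ℝ → En n} (hu₁ : InL2 u₁)
    (hu₂ : InL2 u₂) (hne : ¬u₁ =ᵐ[mu0] u₂) {X Y : ℝ →₂[mu0] En n} (hX : ⇑X =ᵐ[mu0] u₁ - u₂)
    (hY : ⇑Y =ᵐ[mu0] F u₁ - F u₂) :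
    ((‖Y‖ / ‖X‖ : ℝ) : ℂ) * exp (I * angle X Y) ∈ srgOp F ∧
      ((‖Y‖ / ‖X‖ : ℝ) : ℂ) * exp (-(I * angle X Y)) ∈ srgOp F := by
  rw [← nrm_eq_norm hX, ← nrm_eq_norm hY, ← ang_eq_angle hX hY]
  exact ⟨⟨u₁, u₂, hu₁, hu₂, hne, Or.inl rfl⟩, ⟨u₁, u₂, hu₁, hu₂, hne, Or.inr rfl⟩⟩

def LoopEq (H₁ H₂ : (ℝ → En n) → (ℝ → En n)) (τ : ℝ) (u e y : ℝ → En n) : Prop :=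
  e =ᵐ[mu0] u - τ • H₂ y ∧ y =ᵐ[mu0] H₁ e

def SrgSeparated (H₁ H₂ : (ℝ → En n) → (ℝ → En n)) (τ r : ℝ) : Prop :=
  ∀ z ∈ srgOp H₁, z ≠ 0 → ∀ w ∈ chordClosure (srgOp H₂), r ≤ ‖z⁻¹ - (-((τ : ℂ) * w))‖

theorem SrgSeparated.mul_nrm_sub_le {τ r : ℝ} (hsep : SrgSeparated H₁ H₂ τ r) (hτ : 0 ≤ τ)
    (hmap₂ : ∀ u, InL2 u → InL2 (H₂ u))
    (hae₁ : ∀ u v, InL2 u → InL2 v → u =ᵐ[mu0] v → H₁ u =ᵐ[mu0] H₁ v)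
    {u₁ u₂ e₁ e₂ y₁ y₂ : ℝ → En n} (he₁ : InL2 e₁) (he₂ : InL2 e₂) (hy₁ : InL2 y₁)
    (hy₂ : InL2 y₂) (h₁ : LoopEq H₁ H₂ τ u₁ e₁ y₁) (h₂ : LoopEq H₁ H₂ τ u₂ e₂ y₂) :
    r * nrm (y₁ - y₂) ≤ nrm (u₁ - u₂) := by
  by_cases hyy : y₁ =ᵐ[mu0] y₂
  · rw [nrm_congr hyy.sub_eq, nrm_zero, mul_zero]
    exact nrm_nonneg _
  have hee : ¬e₁ =ᵐ[mu0] e₂ := fun h => hyy (h₁.2.trans ((hae₁ _ _ he₁ he₂ h).trans h₂.2.symm))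
  set X := (he₁.sub he₂).toLp (e₁ - e₂)
  set Y := (hy₁.sub hy₂).toLp (y₁ - y₂)
  set V := ((hmap₂ _ hy₁).sub (hmap₂ _ hy₂)).toLp (H₂ y₁ - H₂ y₂)
  have hX : ⇑X =ᵐ[mu0] e₁ - e₂ := MemLp.coeFn_toLp _
  have hY : ⇑Y =ᵐ[mu0] y₁ - y₂ := MemLp.coeFn_toLp _
  have hV : ⇑V =ᵐ[mu0] H₂ y₁ - H₂ y₂ := MemLp.coeFn_toLp _
  have hXV : ⇑(X + τ • V) =ᵐ[mu0] u₁ - u₂ := by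
    filter_upwards [Lp.coeFn_add X (τ • V), Lp.coeFn_smul τ V, hX, hV, h₁.1, h₂.1]
      with t hadd hsmul hXt hVt he₁t he₂t
    simp only [hadd, Pi.add_apply, hsmul, Pi.smul_apply, hXt, hVt, Pi.sub_apply, he₁t, he₂t]
    module
  have hX0 : X ≠ 0 := Lp.ne_zero_of_ae_eq_sub hX hee
  have hY0 : Y ≠ 0 := Lp.ne_zero_of_ae_eq_sub hY hyy
  obtain ⟨-, hz⟩ := mem_srgOp he₁ he₂ hee hX (hY.trans (h₁.2.sub h₂.2))
  obtain ⟨hw, -⟩ := mem_srgOp hy₁ hy₂ hyy hY hV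
  have hz0 : ((‖Y‖ / ‖X‖ : ℝ) : ℂ) * exp (-(I * angle X Y)) ≠ 0 :=
    mul_ne_zero (ofReal_ne_zero.2 (div_ne_zero (norm_ne_zero_iff.2 hY0)
      (norm_ne_zero_iff.2 hX0))) (exp_ne_zero _)
  obtain ⟨l, hl, hle⟩ := exists_chord_norm_le X V hY0 hτ
  have hsepXY := hsep _ hz hz0 _ (mem_chordClosure hw hl)
  rw [mul_inv, ← exp_neg, neg_neg, ← ofReal_inv, inv_div, sub_neg_eq_add] at hsepXY
  rw [nrm_eq_norm hY, nrm_eq_norm hXV, ← le_div_iff₀ (norm_pos_iff.2 hY0)]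
  exact hsepXY.trans hle

end SRG

section Homotopy

variable {H H₁ H₂ He H₁e H₂e : (ℝ → En n) → (ℝ → En n)} {γ γ₁ γ₂ τ r T : ℝ}

def HasGain (H : (ℝ → En n) → (ℝ → En n)) (γ : ℝ) : Prop :=
  ∀ u, InL2 u → eLpNorm (H u) 2 mu0 ≤ ENNReal.ofReal γ * eLpNorm u 2 mu0

structure IsCausalExtension (He H : (ℝ → En n) → (ℝ → En n)) : Prop where
  inL2e : ∀ u, InL2e u → InL2e (He u)
  ae_eq : ∀ u, InL2 u → He u =ᵐ[mu0] H u
  trunc_ae_eq : ∀ T > 0, ∀ u, InL2e u → trunc T (He u) =ᵐ[mu0] trunc T (He (trunc T u))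

def LoopSolvable (H₁e H₂e : (ℝ → En n) → (ℝ → En n)) (τ : ℝ) : Prop :=
  ∀ u, InL2e u → ∃ e y, InL2e e ∧ InL2e y ∧ LoopEq H₁e H₂e τ u e y

def LoopCausal (H₁e H₂e : (ℝ → En n) → (ℝ → En n)) (τ : ℝ) : Prop :=
  ∀ T > 0, ∀ u e y e' y', InL2e u → InL2e e → InL2e y → LoopEq H₁e H₂e τ u e y →
    InL2e e' → InL2e y' → LoopEq H₁e H₂e τ (trunc T u) e' y' → trunc T y' =ᵐ[mu0] trunc T y

def LoopOutputsInL2 (H₁e H₂e : (ℝ → En n) → (ℝ → En n)) (τ : ℝ) : Prop :=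
  ∀ u e y, InL2 u → InL2e e → InL2e y → LoopEq H₁e H₂e τ u e y → InL2 y

theorem HasGain.ae_eq_zero (hγ : HasGain H γ) (h0 : InL2 (H 0)) : H 0 =ᵐ[mu0] 0 := by
  have h := hγ 0 MemLp.zero
  rwa [eLpNorm_zero, mul_zero, nonpos_iff_eq_zero, eLpNorm_eq_zero_iff h0.1 two_ne_zero] at h

theorem IsCausalExtension.nrm_trunc_le (hext : IsCausalExtension He H) (hγ : HasGain H γ)
    (hγ0 : 0 ≤ γ) {u : ℝ → En n} (hu : InL2e u) (hT : 0 < T) :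
    nrm (trunc T (He u)) ≤ γ * nrm (trunc T u) := by
  rw [nrm_congr ((hext.trunc_ae_eq T hT u hu).trans (trunc_congr T (hext.ae_eq _ (hu T hT))))]
  exact nrm_le_mul_of_eLpNorm_le hγ0 (hu T hT) ((eLpNorm_trunc_le T _).trans (hγ _ (hu T hT)))

theorem IsCausalExtension.nrm_trunc_sub_smul_le (hext : IsCausalExtension He H)
    (hγ : HasGain H γ) (hγ0 : 0 ≤ γ) {u y : ℝ → En n} (hu : InL2 u) (hy : InL2e y) {c : ℝ}
    (hc : 0 ≤ c) (hT : 0 < T) :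
    nrm (trunc T (u - c • He y)) ≤ nrm u + c * (γ * nrm (trunc T y)) := by
  rw [trunc_sub, trunc_smul]
  calc _ ≤ nrm (trunc T u) + nrm (c • trunc T (He y)) :=
        nrm_sub_le (hu.trunc T) ((hext.inL2e y hy T hT).const_smul c)
    _ ≤ nrm u + c * (γ * nrm (trunc T y)) := by
      rw [nrm_smul, abs_of_nonneg hc]
      gcongr
      · exact _root_.nrm_trunc_le hu T
      · exact hext.nrm_trunc_le hγ hγ0 hy hT

theorem LoopEq.of_causalExtension {u e y : ℝ → En n} (h : LoopEq H₁e H₂e τ u e y)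
    (ext₁ : IsCausalExtension H₁e H₁) (ext₂ : IsCausalExtension H₂e H₂)
    (hmap₂ : ∀ u, InL2 u → InL2 (H₂ u)) (hu : InL2 u) (hy : InL2 y) :
    InL2 e ∧ LoopEq H₁ H₂ τ u e y := by
  have he : e =ᵐ[mu0] u - τ • H₂ y :=
    h.1.trans ((EventuallyEq.refl _ u).sub ((ext₂.ae_eq y hy).const_smul τ))
  have heL2 : InL2 e := (memLp_congr_ae he).2 (hu.sub ((hmap₂ y hy).const_smul τ))
  exact ⟨heL2, he, h.2.trans (ext₁.ae_eq e heL2)⟩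

theorem SrgSeparated.mul_nrm_le (hsep : SrgSeparated H₁ H₂ τ r) (hτ : 0 ≤ τ)
    (hmap₂ : ∀ u, InL2 u → InL2 (H₂ u))
    (hae₁ : ∀ u v, InL2 u → InL2 v → u =ᵐ[mu0] v → H₁ u =ᵐ[mu0] H₁ v)
    (h₁0 : H₁ 0 =ᵐ[mu0] 0) (h₂0 : H₂ 0 =ᵐ[mu0] 0) {u e y : ℝ → En n} (he : InL2 e)
    (hy : InL2 y) (h : LoopEq H₁ H₂ τ u e y) : r * nrm y ≤ nrm u := by
  have h0 : LoopEq H₁ H₂ τ 0 0 0 := by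
    refine ⟨?_, h₁0.symm⟩
    filter_upwards [h₂0] with t ht
    simp [ht]
  simpa using hsep.mul_nrm_sub_le hτ hmap₂ hae₁ he MemLp.zero hy MemLp.zero h h0

theorem LoopOutputsInL2.mul_nrm_trunc_le (hout : LoopOutputsInL2 H₁e H₂e τ)
    (hsolv : LoopSolvable H₁e H₂e τ) (hcaus : LoopCausal H₁e H₂e τ)
    (ext₁ : IsCausalExtension H₁e H₁) (ext₂ : IsCausalExtension H₂e H₂)
    (hmap₂ : ∀ u, InL2 u → InL2 (H₂ u)) (hr : 0 ≤ r)
    (hL2 : ∀ u e y, InL2 e → InL2 y → LoopEq H₁ H₂ τ u e y → r * nrm y ≤ nrm u)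
    {u e y : ℝ → En n} (hu : InL2e u) (he : InL2e e) (hy : InL2e y)
    (h : LoopEq H₁e H₂e τ u e y) (hT : 0 < T) :
    r * nrm (trunc T y) ≤ nrm (trunc T u) := by
  -- the loop driven by `trunc T u` has an `L²` output, which agrees with `y` before `T`
  obtain ⟨e', y', he', hy', h'⟩ := hsolv _ (hu T hT).inL2e
  have hy'L2 : InL2 y' := hout _ _ _ (hu T hT) he' hy' h'
  obtain ⟨he'L2, h'L2⟩ := h'.of_causalExtension ext₁ ext₂ hmap₂ (hu T hT) hy'L2
  calc r * nrm (trunc T y) = r * nrm (trunc T y') := by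
        rw [nrm_congr (hcaus T hT u e y e' y' hu he hy h he' hy' h')]
    _ ≤ r * nrm y' := by gcongr; exact nrm_trunc_le hy'L2 T
    _ ≤ nrm (trunc T u) := hL2 _ _ _ he'L2 hy'L2 h'L2

theorem loopOutputsInL2_of_mul_le_half (ext₁ : IsCausalExtension H₁e H₁)
    (ext₂ : IsCausalExtension H₂e H₂) (hγ₁ : HasGain H₁ γ₁) (hγ₂ : HasGain H₂ γ₂)
    (hγ₁0 : 0 ≤ γ₁) (hγ₂0 : 0 ≤ γ₂) (hτ : 0 ≤ τ) (hsmall : τ * (γ₁ * γ₂) ≤ 1 / 2) :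
    LoopOutputsInL2 H₁e H₂e τ := by
  intro u e y hu he hy h
  refine hy.inL2_of_nrm_trunc_le (C := 2 * γ₁ * nrm u) fun T hT => ?_
  have hyT : nrm (trunc T y) ≤ γ₁ * nrm (trunc T e) := by
    rw [nrm_congr (trunc_congr T h.2)]
    exact ext₁.nrm_trunc_le hγ₁ hγ₁0 he hT
  have heT : nrm (trunc T e) ≤ nrm u + τ * (γ₂ * nrm (trunc T y)) := by
    rw [nrm_congr (trunc_congr T h.1)]
    exact ext₂.nrm_trunc_sub_smul_le hγ₂ hγ₂0 hu hy hτ hT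
  nlinarith [mul_le_mul_of_nonneg_left heT hγ₁0,
    mul_le_mul_of_nonneg_right hsmall (nrm_nonneg (trunc T y))]

theorem loopOutputsInL2_of_mul_nrm_trunc_le (ext₂ : IsCausalExtension H₂e H₂)
    (hγ₂ : HasGain H₂ γ₂) (hγ₂0 : 0 ≤ γ₂) (hr : 0 < r)
    (hbound : ∀ u e y, InL2e u → InL2e e → InL2e y → LoopEq H₁e H₂e τ u e y →
      ∀ T > 0, r * nrm (trunc T y) ≤ nrm (trunc T u))
    {τ' : ℝ} (hττ' : τ ≤ τ') (hδ : (τ' - τ) * γ₂ ≤ r / 2) :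
    LoopOutputsInL2 H₁e H₂e τ' := by
  intro u e y hu he hy h
  refine hy.inL2_of_nrm_trunc_le (C := 2 * nrm u / r) fun T hT => ?_
  have hsplit : u - τ' • H₂e y = (u - (τ' - τ) • H₂e y) - τ • H₂e y := by
    rw [sub_sub, ← add_smul, sub_add_cancel]
  have hyT := hbound _ e y (hu.inL2e.sub ((ext₂.inL2e y hy).smul _)) he hy
    ⟨hsplit ▸ h.1, h.2⟩ T hT
  have huT := ext₂.nrm_trunc_sub_smul_le hγ₂ hγ₂0 hu hy (sub_nonneg.2 hττ') hT
  rw [le_div_iff₀ hr]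
  nlinarith [mul_le_mul_of_nonneg_right hδ (nrm_nonneg (trunc T y))]

theorem holds_at_one_of_uniform_step {P : ℝ → Prop} {τ₀ δ : ℝ} (hδ : 0 < δ)
    (hτ₀ : τ₀ ∈ Set.Ioc (0 : ℝ) 1) (h₀ : P τ₀)
    (hstep : ∀ τ τ', 0 < τ → τ ≤ τ' → τ' ≤ 1 → τ' - τ ≤ δ → P τ → P τ') : P 1 := by
  have hk : ∀ k : ℕ, P (min 1 (τ₀ + k * δ)) := by
    intro k
    induction k with
    | zero => simpa [min_eq_right hτ₀.2] using h₀
    | succ k ih =>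
      refine hstep _ _ (lt_min one_pos (by have := hτ₀.1; positivity))
        (min_le_min_left _ (by push_cast; linarith)) (min_le_left _ _) ?_ ih
      push_cast
      simp only [min_def]
      split_ifs <;> linarith
  obtain ⟨k, hk'⟩ := exists_nat_ge ((1 - τ₀) / δ)
  rw [div_le_iff₀ hδ] at hk'
  simpa [min_eq_left (by linarith : (1 : ℝ) ≤ τ₀ + k * δ)] using hk k

theorem loopOutputsInL2_one (ext₁ : IsCausalExtension H₁e H₁) (ext₂ : IsCausalExtension H₂e H₂)
    (hmap₂ : ∀ u, InL2 u → InL2 (H₂ u)) (hγ₁ : HasGain H₁ γ₁) (hγ₂ : HasGain H₂ γ₂)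
    (hγ₁0 : 0 < γ₁) (hγ₂0 : 0 < γ₂) (hr : 0 < r)
    (hsolv : ∀ τ ∈ Set.Ioc (0 : ℝ) 1, LoopSolvable H₁e H₂e τ)
    (hcaus : ∀ τ ∈ Set.Ioc (0 : ℝ) 1, LoopCausal H₁e H₂e τ)
    (hL2 : ∀ τ ∈ Set.Ioc (0 : ℝ) 1, ∀ u e y, InL2 e → InL2 y → LoopEq H₁ H₂ τ u e y →
      r * nrm y ≤ nrm u) :
    LoopOutputsInL2 H₁e H₂e 1 := by
  refine holds_at_one_of_uniform_step (τ₀ := min 1 (1 / (2 * (γ₁ * γ₂))))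
    (δ := r / (2 * γ₂)) (by positivity) ⟨lt_min one_pos (by positivity), min_le_left _ _⟩ ?_ ?_
  · refine loopOutputsInL2_of_mul_le_half ext₁ ext₂ hγ₁ hγ₂ hγ₁0.le hγ₂0.le (by positivity) ?_
    calc min 1 (1 / (2 * (γ₁ * γ₂))) * (γ₁ * γ₂) ≤ 1 / (2 * (γ₁ * γ₂)) * (γ₁ * γ₂) := by
          gcongr
          exact min_le_right _ _
      _ = 1 / 2 := by field_simp
  · intro τ τ' hτ hττ' hτ' hδ hout
    have hτ1 : τ ∈ Set.Ioc (0 : ℝ) 1 := ⟨hτ, hττ'.trans hτ'⟩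
    refine loopOutputsInL2_of_mul_nrm_trunc_le ext₂ hγ₂ hγ₂0.le hr
      (fun u e y hu he hy h T hT => hout.mul_nrm_trunc_le (hsolv τ hτ1) (hcaus τ hτ1) ext₁ ext₂
        hmap₂ hr.le (hL2 τ hτ1) hu he hy h hT) hττ' ?_
    calc (τ' - τ) * γ₂ ≤ r / (2 * γ₂) * γ₂ := by gcongr
      _ = r / 2 := by field_simp

theorem exists_fbMem (ext₁ : IsCausalExtension H₁e H₁) (ext₂ : IsCausalExtension H₂e H₂)
    (hmap₂ : ∀ u, InL2 u → InL2 (H₂ u)) (hsolv : LoopSolvable H₁e H₂e 1)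
    (hout : LoopOutputsInL2 H₁e H₂e 1) {u : ℝ → En n} (hu : InL2 u) : ∃ y, FbMem H₁ H₂ 1 u y := by
  obtain ⟨e, y, he, hy, h⟩ := hsolv u hu.inL2e
  have hyL2 := hout u e y hu he hy h
  obtain ⟨heL2, he', hy'⟩ := h.of_causalExtension ext₁ ext₂ hmap₂ hu hyL2
  exact ⟨y, hu, hyL2, e, heL2, he', hy', fun _ _ he'' _ => he''.trans he'.symm⟩

theorem SrgSeparated.eLpNorm_sub_le_of_fbMem (hsep : SrgSeparated H₁ H₂ 1 r) (hr : 0 < r)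
    (hmap₂ : ∀ u, InL2 u → InL2 (H₂ u))
    (hae₁ : ∀ u v, InL2 u → InL2 v → u =ᵐ[mu0] v → H₁ u =ᵐ[mu0] H₁ v)
    {u₁ u₂ y₁ y₂ : ℝ → En n} (h₁ : FbMem H₁ H₂ 1 u₁ y₁) (h₂ : FbMem H₁ H₂ 1 u₂ y₂) :
    eLpNorm (y₁ - y₂) 2 mu0 ≤ ENNReal.ofReal r⁻¹ * eLpNorm (u₁ - u₂) 2 mu0 := by
  obtain ⟨-, hy₁, e₁, he₁, h₁e, h₁y, -⟩ := h₁
  obtain ⟨-, hy₂, e₂, he₂, h₂e, h₂y, -⟩ := h₂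
  refine eLpNorm_le_of_nrm_le (inv_nonneg.2 hr.le) (hy₁.sub hy₂) ?_
  rw [← div_eq_inv_mul, le_div_iff₀' hr]
  exact hsep.mul_nrm_sub_le zero_le_one hmap₂ hae₁ he₁ he₂ hy₁ hy₂ ⟨h₁e, h₁y⟩ ⟨h₂e, h₂y⟩

end Homotopy

theorem srg_separation_non_incremental_general
    (H₁ H₂ H₁e H₂e : (ℝ → En n) → (ℝ → En n))
    -- `H₁, H₂` are operators on `L²` (preserving `L²` and a.e. equality)
    (hmap₁ : ∀ u, InL2 u → InL2 (H₁ u)) (hmap₂ : ∀ u, InL2 u → InL2 (H₂ u))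
    (hae₁ : ∀ u v, InL2 u → InL2 v → u =ᵐ[mu0] v → H₁ u =ᵐ[mu0] H₁ v)
    -- (i) `H₁, H₂` are causal and have finite gain with zero offset
    (hg₁ : ∃ γ₁ : ℝ, 0 < γ₁ ∧ ∀ u, InL2 u →
      eLpNorm (H₁ u) 2 mu0 ≤ ENNReal.ofReal γ₁ * eLpNorm u 2 mu0)
    (hg₂ : ∃ γ₂ : ℝ, 0 < γ₂ ∧ ∀ u, InL2 u →
      eLpNorm (H₂ u) 2 mu0 ≤ ENNReal.ofReal γ₂ * eLpNorm u 2 mu0)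
    -- `H₁e, H₂e` are the causal extensions of `H₁, H₂` to the extended space
    (hext₁ : (∀ u, InL2e u → InL2e (H₁e u)) ∧ (∀ u, InL2 u → H₁e u =ᵐ[mu0] H₁ u) ∧
      (∀ T > 0, ∀ u, InL2e u → trunc T (H₁e u) =ᵐ[mu0] trunc T (H₁e (trunc T u))))
    (hext₂ : (∀ u, InL2e u → InL2e (H₂e u)) ∧ (∀ u, InL2 u → H₂e u =ᵐ[mu0] H₂ u) ∧
      (∀ T > 0, ∀ u, InL2e u → trunc T (H₂e u) =ᵐ[mu0] trunc T (H₂e (trunc T u))))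
    -- (ii) `[H₁, τH₂]` is well-posed and causal on the extended space for `τ ∈ (0, 1]`
    (hwp : ∀ τ ∈ Set.Ioc (0 : ℝ) 1, ∀ u, InL2e u → ∃ e y, InL2e e ∧ InL2e y ∧
      e =ᵐ[mu0] u - τ • H₂e y ∧ y =ᵐ[mu0] H₁e e ∧
      ∀ e' y', InL2e e' → InL2e y' → e' =ᵐ[mu0] u - τ • H₂e y' → y' =ᵐ[mu0] H₁e e' →
        e' =ᵐ[mu0] e ∧ y' =ᵐ[mu0] y)
    (hclcausal : ∀ τ ∈ Set.Ioc (0 : ℝ) 1, ∀ T > 0, ∀ u e y e' y',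
      InL2e u → InL2e e → InL2e y →
      e =ᵐ[mu0] u - τ • H₂e y → y =ᵐ[mu0] H₁e e →
      InL2e e' → InL2e y' →
      e' =ᵐ[mu0] trunc T u - τ • H₂e y' → y' =ᵐ[mu0] H₁e e' →
      trunc T y' =ᵐ[mu0] trunc T y)
    -- (iii) `H₁, H₂` have strictly separated SRGs with margin `r_min > 0`
    (rmin : ℝ) (hrmin : 0 < rmin)
    (hsep : ∀ τ ∈ Set.Ioc (0 : ℝ) 1, ∀ z ∈ srgOp H₁, z ≠ 0 →
      ∀ w ∈ chordClosure (srgOp H₂),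
        rmin ≤ ‖z⁻¹ - (-((τ : ℂ) * w))‖) :
    -- conclusion: `[H₁, H₂]` maps all of `L²` to `L²` and has finite incremental gain
    (∀ u, InL2 u → ∃ y, FbMem H₁ H₂ 1 u y) ∧
    (∃ γ' : ℝ, ∀ u₁ y₁ u₂ y₂,
      FbMem H₁ H₂ 1 u₁ y₁ → FbMem H₁ H₂ 1 u₂ y₂ →
      eLpNorm (y₁ - y₂) 2 mu0 ≤ ENNReal.ofReal γ' * eLpNorm (u₁ - u₂) 2 mu0) := by
  obtain ⟨γ₁, hγ₁0, hγ₁ : HasGain H₁ γ₁⟩ := hg₁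
  obtain ⟨γ₂, hγ₂0, hγ₂ : HasGain H₂ γ₂⟩ := hg₂
  have ext₁ : IsCausalExtension H₁e H₁ := ⟨hext₁.1, hext₁.2.1, hext₁.2.2⟩
  have ext₂ : IsCausalExtension H₂e H₂ := ⟨hext₂.1, hext₂.2.1, hext₂.2.2⟩
  have hsolv : ∀ τ ∈ Set.Ioc (0 : ℝ) 1, LoopSolvable H₁e H₂e τ := fun τ hτ u hu =>
    let ⟨e, y, he, hy, h₁, h₂, _⟩ := hwp τ hτ u hu
    ⟨e, y, he, hy, h₁, h₂⟩
  have hcaus : ∀ τ ∈ Set.Ioc (0 : ℝ) 1, LoopCausal H₁e H₂e τ :=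
    fun τ hτ T hT u e y e' y' hu he hy h he' hy' h' =>
      hclcausal τ hτ T hT u e y e' y' hu he hy h.1 h.2 he' hy' h'.1 h'.2
  have hL2 : ∀ τ ∈ Set.Ioc (0 : ℝ) 1, ∀ u e y, InL2 e → InL2 y → LoopEq H₁ H₂ τ u e y →
      rmin * nrm y ≤ nrm u := fun τ hτ _ _ _ =>
    SrgSeparated.mul_nrm_le (hsep τ hτ) hτ.1.le hmap₂ hae₁
      (hγ₁.ae_eq_zero (hmap₁ 0 MemLp.zero)) (hγ₂.ae_eq_zero (hmap₂ 0 MemLp.zero))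
  have hout := loopOutputsInL2_one ext₁ ext₂ hmap₂ hγ₁ hγ₂ hγ₁0 hγ₂0 hrmin hsolv hcaus hL2
  have h1 : (1 : ℝ) ∈ Set.Ioc (0 : ℝ) 1 := ⟨one_pos, le_rfl⟩
  exact ⟨fun u hu => exists_fbMem ext₁ ext₂ hmap₂ (hsolv 1 h1) hout hu,
    rmin⁻¹, fun _ _ _ _ => SrgSeparated.eLpNorm_sub_le_of_fbMem (hsep 1 h1) hrmin hmap₂ hae₁⟩

theorem srg_separation_non_incremental
    (H₁ H₂ H₁e H₂e : (ℝ → En n) → (ℝ → En n))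
    -- `H₁, H₂` are operators on `L²` (preserving `L²` and a.e. equality)
    (hmap₁ : ∀ u, InL2 u → InL2 (H₁ u)) (hmap₂ : ∀ u, InL2 u → InL2 (H₂ u))
    (hae₁ : ∀ u v, InL2 u → InL2 v → u =ᵐ[mu0] v → H₁ u =ᵐ[mu0] H₁ v)
    (hae₂ : ∀ u v, InL2 u → InL2 v → u =ᵐ[mu0] v → H₂ u =ᵐ[mu0] H₂ v)
    -- (i) `H₁, H₂` are causal and have finite gain with zero offset
    (hc₁ : ∀ T > 0, ∀ u, InL2 u → trunc T (H₁ (trunc T u)) =ᵐ[mu0] trunc T (H₁ u))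
    (hc₂ : ∀ T > 0, ∀ u, InL2 u → trunc T (H₂ (trunc T u)) =ᵐ[mu0] trunc T (H₂ u))
    (hg₁ : ∃ γ₁ : ℝ, 0 < γ₁ ∧ ∀ u, InL2 u →
      eLpNorm (H₁ u) 2 mu0 ≤ ENNReal.ofReal γ₁ * eLpNorm u 2 mu0)
    (hg₂ : ∃ γ₂ : ℝ, 0 < γ₂ ∧ ∀ u, InL2 u →
      eLpNorm (H₂ u) 2 mu0 ≤ ENNReal.ofReal γ₂ * eLpNorm u 2 mu0)
    -- `H₁e, H₂e` are the causal extensions of `H₁, H₂` to the extended space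
    (hext₁ : (∀ u, InL2e u → InL2e (H₁e u)) ∧ (∀ u, InL2 u → H₁e u =ᵐ[mu0] H₁ u) ∧
      (∀ T > 0, ∀ u, InL2e u → trunc T (H₁e u) =ᵐ[mu0] trunc T (H₁e (trunc T u))))
    (hext₂ : (∀ u, InL2e u → InL2e (H₂e u)) ∧ (∀ u, InL2 u → H₂e u =ᵐ[mu0] H₂ u) ∧
      (∀ T > 0, ∀ u, InL2e u → trunc T (H₂e u) =ᵐ[mu0] trunc T (H₂e (trunc T u))))
    -- (ii) `[H₁, τH₂]` is well-posed and causal on the extended space for `τ ∈ (0, 1]`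
    (hwp : ∀ τ ∈ Set.Ioc (0 : ℝ) 1, ∀ u, InL2e u → ∃ e y, InL2e e ∧ InL2e y ∧
      e =ᵐ[mu0] u - τ • H₂e y ∧ y =ᵐ[mu0] H₁e e ∧
      ∀ e' y', InL2e e' → InL2e y' → e' =ᵐ[mu0] u - τ • H₂e y' → y' =ᵐ[mu0] H₁e e' →
        e' =ᵐ[mu0] e ∧ y' =ᵐ[mu0] y)
    (hclcausal : ∀ τ ∈ Set.Ioc (0 : ℝ) 1, ∀ T > 0, ∀ u e y e' y',
      InL2e u → InL2e e → InL2e y →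
      e =ᵐ[mu0] u - τ • H₂e y → y =ᵐ[mu0] H₁e e →
      InL2e e' → InL2e y' →
      e' =ᵐ[mu0] trunc T u - τ • H₂e y' → y' =ᵐ[mu0] H₁e e' →
      trunc T y' =ᵐ[mu0] trunc T y)
    -- (iii) `H₁, H₂` have strictly separated SRGs with margin `r_min > 0`
    (rmin : ℝ) (hrmin : 0 < rmin)
    (hsep : ∀ τ ∈ Set.Ioc (0 : ℝ) 1, ∀ z ∈ srgOp H₁, z ≠ 0 →
      ∀ w ∈ chordClosure (srgOp H₂),
        rmin ≤ ‖z⁻¹ - (-((τ : ℂ) * w))‖) :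
    -- conclusion: `[H₁, H₂]` maps all of `L²` to `L²` and has finite incremental gain
    (∀ u, InL2 u → ∃ y, FbMem H₁ H₂ 1 u y) ∧
    (∃ γ' : ℝ, ∀ u₁ y₁ u₂ y₂,
      FbMem H₁ H₂ 1 u₁ y₁ → FbMem H₁ H₂ 1 u₂ y₂ →
      eLpNorm (y₁ - y₂) 2 mu0 ≤ ENNReal.ofReal γ' * eLpNorm (u₁ - u₂) 2 mu0) :=
  srg_separation_non_incremental_general H₁ H₂ H₁e H₂e hmap₁ hmap₂ hae₁ hg₁ hg₂ hext₁ hext₂ hwp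
    hclcausal rmin hrmin hsep

end
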